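/- arXiv:2503.10268 — 2 statements merged into one kernel-verified Lean document; each statement's English description precedes it below -/
import Mathlib

section
/- Let k ≥ 4 and let H be a C_k-saturated graph on m ≥ k vertices. Then the join K_1 ∨ H, obtained by adding one new vertex adjacent to all vertices of H, is a W_k-saturated graph on m + 1 vertices with e(H) + m edges. -/
open SimpleGraph

/-- `G` contains a copy of `F`, i.e. a subgraph isomorphic to `F`. -/
def HasCopy {V W : Type*} (F : SimpleGraph V) (G : SimpleGraph W) : Prop :=
  ∃ f : F →g G, Function.Injective f

/-- `G` is `F`-free: `G` contains no subgraph isomorphic to `F`. -/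
def IsFree {V W : Type*} (F : SimpleGraph V) (G : SimpleGraph W) : Prop :=
  ¬ HasCopy F G

/-- `G` is `F`-semi-saturated: for every pair of non-adjacent vertices `u ≠ v`,
the graph `G + uv` contains a copy of `F` using the edge `uv`. -/
def IsSemiSat {V W : Type*} (F : SimpleGraph V) (G : SimpleGraph W) : Prop :=
  ∀ u v : W, u ≠ v → ¬ G.Adj u v →
    ∃ f : F →g (G ⊔ fromEdgeSet {s(u, v)}), Function.Injective f ∧
      ∃ a b : V, F.Adj a b ∧ f a = u ∧ f b = v

/-- `G` is `F`-saturated: `F`-free and `F`-semi-saturated. -/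
def IsSat {V W : Type*} (F : SimpleGraph V) (G : SimpleGraph W) : Prop :=
  IsFree F G ∧ IsSemiSat F G

/-- The join `G ∨ H` of two graphs. -/
def graphJoin {V W : Type*} (G : SimpleGraph V) (H : SimpleGraph W) :
    SimpleGraph (V ⊕ W) where
  Adj x y :=
    match x, y with
    | Sum.inl a, Sum.inl b => G.Adj a b
    | Sum.inr a, Sum.inr b => H.Adj a b
    | Sum.inl _, Sum.inr _ => True
    | Sum.inr _, Sum.inl _ => True
  symm := ⟨by rintro (a | a) (b | b) h <;> first | exact G.adj_symm h | exact H.adj_symm h | trivial⟩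
  loopless := ⟨by rintro (a | a) h <;> first | exact G.irrefl h | exact H.irrefl h⟩

/-- The wheel `W_k = K_1 ∨ C_k`. -/
def wheel (k : ℕ) : SimpleGraph (Unit ⊕ Fin k) :=
  graphJoin (⊥ : SimpleGraph Unit) (cycleGraph k)

/-- `sat(n, F)`: the minimum number of edges in an `F`-saturated graph on `n` vertices. -/
noncomputable def satNumber {V : Type*} (F : SimpleGraph V) (n : ℕ) : ℕ :=
  sInf { m | ∃ G : SimpleGraph (Fin n), IsSat F G ∧ G.edgeSet.ncard = m }

/-- `ssat(n, F)`: the minimum number of edges in an `F`-semi-saturated graph on `n` vertices. -/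
noncomputable def ssatNumber {V : Type*} (F : SimpleGraph V) (n : ℕ) : ℕ :=
  sInf { m | ∃ G : SimpleGraph (Fin n), IsSemiSat F G ∧ G.edgeSet.ncard = m }

/-!
A copy of `W_k = K_1 ∨ C_k` in `K_1 ∨ H` uses the apex of `K_1 ∨ H` at most once. If a rim vertex
of the wheel lands on the apex, exchange it with the hub: the hub is adjacent to the whole rim, so
the rim still spans a copy of `C_k`, which now avoids the apex and hence lies in `H`. Thus a
`C_k`-free `H` gives a `W_k`-free join. Conversely, the apex is adjacent to everything, so every
non-edge of `K_1 ∨ H` is a non-edge `uv` of `H`, and the apex together with a `C_k` through `uv` in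
`H + uv` is a `W_k` through `uv`.
-/

open Sum

section GraphJoin

variable {U V W V' W' : Type*}

@[simp] lemma graphJoin_adj_inl_inl {G : SimpleGraph U} {H : SimpleGraph W} {a b : U} :
    (graphJoin G H).Adj (inl a) (inl b) ↔ G.Adj a b := Iff.rfl

@[simp] lemma graphJoin_adj_inr_inr {G : SimpleGraph U} {H : SimpleGraph W} {a b : W} :
    (graphJoin G H).Adj (inr a) (inr b) ↔ H.Adj a b := Iff.rfl

@[simp] lemma graphJoin_adj_inl_inr {G : SimpleGraph U} {H : SimpleGraph W} {a : U} {b : W} :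
    (graphJoin G H).Adj (inl a) (inr b) := trivial

@[simp] lemma graphJoin_adj_inr_inl {G : SimpleGraph U} {H : SimpleGraph W} {a : W} {b : U} :
    (graphJoin G H).Adj (inr a) (inl b) := trivial

def SimpleGraph.Hom.graphJoin {G : SimpleGraph U} {G' : SimpleGraph V'} {H : SimpleGraph W}
    {H' : SimpleGraph W'} (φ : G →g G') (ψ : H →g H') : graphJoin G H →g graphJoin G' H' where
  toFun := Sum.map φ ψ
  map_rel' := by
    rintro (a | a) (b | b) h
    exacts [φ.map_rel h, trivial, trivial, ψ.map_rel h]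

def graphJoinInr (G : SimpleGraph U) (H : SimpleGraph W) : H →g graphJoin G H :=
  ⟨inr, id⟩

def replaceByApex [DecidableEq V] (F : SimpleGraph V) (v₀ : V) :
    F →g graphJoin (⊥ : SimpleGraph Unit) F where
  toFun v := Equiv.swap (inl ()) (inr v₀) (inr v)
  map_rel' {v w} h := by
    have hvw : v ≠ w := h.ne
    by_cases hv : v = v₀ <;> by_cases hw : w = v₀
    all_goals simp_all [Equiv.swap_apply_def]

lemma replaceByApex_apply [DecidableEq V] (F : SimpleGraph V) (v₀ v : V) :
    replaceByApex F v₀ v = if v = v₀ then inl () else inr v := by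
  simp [replaceByApex, Equiv.swap_apply_def]

lemma hasCopy_of_forall_eq_inr {F : SimpleGraph V} {G : SimpleGraph U} {H : SimpleGraph W}
    (f : F →g graphJoin G H) (hf : Function.Injective f) (hr : ∀ v, ∃ w, f v = inr w) :
    HasCopy F H := by
  choose g hg using hr
  refine ⟨⟨g, fun {v w} h => ?_⟩, fun v w h => hf (by rw [hg, hg]; exact congrArg inr h)⟩
  simpa only [hg, graphJoin_adj_inr_inr] using f.map_rel h

lemma hasCopy_of_hasCopy_graphJoin_unit {F : SimpleGraph V} {H : SimpleGraph W}
    (h : HasCopy (graphJoin (⊥ : SimpleGraph Unit) F) (graphJoin (⊥ : SimpleGraph Unit) H)) :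
    HasCopy F H := by
  classical
  obtain ⟨f, hf⟩ := h
  have eq_inr_of_ne {x : Unit ⊕ W} (hx : x ≠ inl ()) : ∃ w, x = inr w := by
    rcases x with ⟨⟩ | w
    exacts [absurd rfl hx, ⟨w, rfl⟩]
  by_cases hapex : ∃ v₀, f (inr v₀) = inl ()
  · obtain ⟨v₀, hv₀⟩ := hapex
    refine hasCopy_of_forall_eq_inr (f.comp (replaceByApex F v₀))
      (hf.comp ((Equiv.injective _).comp inr_injective)) fun v => eq_inr_of_ne ?_
    rw [← hv₀]
    refine hf.ne ?_
    simp only [replaceByApex_apply]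
    split_ifs with hv
    exacts [inl_ne_inr, fun h => hv (inr_injective h)]
  · push Not at hapex
    exact hasCopy_of_forall_eq_inr (f.comp (graphJoinInr _ F)) (hf.comp inr_injective)
      fun v => eq_inr_of_ne (hapex v)

lemma graphJoin_sup_edge_le (G : SimpleGraph U) (H : SimpleGraph W) (a b : W) :
    graphJoin G (H ⊔ fromEdgeSet {s(a, b)}) ≤ graphJoin G H ⊔ fromEdgeSet {s(inr a, inr b)} := by
  rintro (x | x) (y | y) h
  · exact Or.inl h
  · exact Or.inl trivial
  · exact Or.inl trivial
  · simpa [Sym2.eq_iff] using h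

lemma IsFree.graphJoin_unit {F : SimpleGraph V} {H : SimpleGraph W} (h : IsFree F H) :
    IsFree (graphJoin (⊥ : SimpleGraph Unit) F) (graphJoin (⊥ : SimpleGraph Unit) H) :=
  fun hc => h (hasCopy_of_hasCopy_graphJoin_unit hc)

lemma IsSemiSat.graphJoin_unit {F : SimpleGraph V} {H : SimpleGraph W} (h : IsSemiSat F H) :
    IsSemiSat (graphJoin (⊥ : SimpleGraph Unit) F) (graphJoin (⊥ : SimpleGraph Unit) H) := by
  rintro (⟨⟩ | a) (⟨⟩ | b) hne hnadj
  · exact absurd rfl hne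
  · exact absurd trivial hnadj
  · exact absurd trivial hnadj
  obtain ⟨f, hf, a', b', hadj, ha, hb⟩ := h a b (fun hab => hne (congrArg inr hab)) hnadj
  exact ⟨(Hom.ofLE (graphJoin_sup_edge_le _ H _ _)).comp (Hom.graphJoin Hom.id f),
    Function.injective_id.sumMap hf, inr a', inr b', hadj, congrArg inr ha, congrArg inr hb⟩

lemma IsSat.graphJoin_unit {F : SimpleGraph V} {H : SimpleGraph W} (h : IsSat F H) :
    IsSat (graphJoin (⊥ : SimpleGraph Unit) F) (graphJoin (⊥ : SimpleGraph Unit) H) :=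
  ⟨h.1.graphJoin_unit, h.2.graphJoin_unit⟩

lemma edgeSet_graphJoin (G : SimpleGraph U) (H : SimpleGraph W) :
    (graphJoin G H).edgeSet = Sym2.map inl '' G.edgeSet ∪ Sym2.map inr '' H.edgeSet ∪
      Set.range (fun x : U × W => s(inl x.1, inr x.2)) := by
  ext e
  induction e using Sym2.ind with
  | _ x y =>
    rcases x with x | x <;> rcases y with y | y <;> simp [Sym2.eq_swap, Sym2.exists]
      <;> grind [SimpleGraph.adj_symm]

lemma ncard_edgeSet_graphJoin [Finite U] [Finite W] (G : SimpleGraph U) (H : SimpleGraph W) :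
    (graphJoin G H).edgeSet.ncard =
      G.edgeSet.ncard + H.edgeSet.ncard + Nat.card U * Nat.card W := by
  rw [edgeSet_graphJoin, Set.ncard_union_eq, Set.ncard_union_eq,
    Set.ncard_image_of_injective _ (Sym2.map.injective inl_injective),
    Set.ncard_image_of_injective _ (Sym2.map.injective inr_injective),
    ← Set.image_univ, Set.ncard_image_of_injective, Set.ncard_univ, Nat.card_prod]
  · rintro ⟨a, b⟩ ⟨c, d⟩ h
    simpa [Sym2.eq_iff] using h
  · refine Set.disjoint_left.2 ?_
    rintro _ ⟨e, -, rfl⟩ ⟨e', -, h⟩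
    induction e using Sym2.ind
    induction e' using Sym2.ind
    simp at h
  · refine Set.disjoint_left.2 ?_
    rintro _ (⟨e, -, rfl⟩ | ⟨e, -, rfl⟩) ⟨⟨a, b⟩, h⟩ <;> induction e using Sym2.ind <;> simp at h

end GraphJoin

theorem join_one_sat_general (k m : ℕ)
    (H : SimpleGraph (Fin m)) (hH : IsSat (cycleGraph k) H) :
    IsSat (wheel k) (graphJoin (⊥ : SimpleGraph Unit) H) ∧
      Fintype.card (Unit ⊕ Fin m) = m + 1 ∧
      (graphJoin (⊥ : SimpleGraph Unit) H).edgeSet.ncard = H.edgeSet.ncard + m :=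
  ⟨hH.graphJoin_unit, by simp [add_comm], by simp [ncard_edgeSet_graphJoin]⟩

/-- If `H` is `C_k`-saturated on `m ≥ k` vertices with `k ≥ 4`, then `K_1 ∨ H` is a
`W_k`-saturated graph on `m + 1` vertices with `e(H) + m` edges. -/
theorem join_one_sat (k m : ℕ) (hk : 4 ≤ k) (hm : k ≤ m)
    (H : SimpleGraph (Fin m)) (hH : IsSat (cycleGraph k) H) :
    IsSat (wheel k) (graphJoin (⊥ : SimpleGraph Unit) H) ∧
      Fintype.card (Unit ⊕ Fin m) = m + 1 ∧
      (graphJoin (⊥ : SimpleGraph Unit) H).edgeSet.ncard = H.edgeSet.ncard + m :=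
  join_one_sat_general k m H hH
end

section
/- Let k ≥ 6 and n ≥ (k−1)² + 1 be integers, and let G be a W_k-semi-saturated graph on n vertices with maximum degree at most n − 2 and with |A*_G| ≥ k. If no vertex of G is adjacent to every vertex of A*_G (i.e. the intersection of the neighbourhoods N(v) over all v ∈ A*_G is empty), then there exists a set X ⊆ V(G) with |X| ≤ (k−1)² such that every vertex u ∈ V(G) ∖ X has at least 2 neighbours in X. -/
open SimpleGraph

/-- The degree of a vertex. -/
noncomputable def degS {n : ℕ} (G : SimpleGraph (Fin n)) (u : Fin n) : ℕ :=
  (G.neighborSet u).ncard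

/-- `A_G`: the vertices of degree at least `k - 1`. -/
def setA {n : ℕ} (k : ℕ) (G : SimpleGraph (Fin n)) : Set (Fin n) :=
  {u | k - 1 ≤ degS G u}

/-- `B_G`: the vertices of degree between `3` and `k - 2`. -/
def setB {n : ℕ} (k : ℕ) (G : SimpleGraph (Fin n)) : Set (Fin n) :=
  {u | 3 ≤ degS G u ∧ degS G u ≤ k - 2}

/-- `C_G`: the vertices of degree `2`. -/
def setC {n : ℕ} (G : SimpleGraph (Fin n)) : Set (Fin n) :=
  {u | degS G u = 2}

/-- `A*_G = B_G ∪ C_G`. -/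
def setAstar {n : ℕ} (k : ℕ) (G : SimpleGraph (Fin n)) : Set (Fin n) :=
  setB k G ∪ setC G

/-
Semi-saturation for a wheel forces every two non-adjacent vertices to have a common
neighbour, because every edge of `W_k` lies in a triangle. Since no vertex is adjacent to all
of `A*`, starting from one `v₀ ∈ A*` and adding, for each neighbour `w` of `v₀`, a vertex of
`A*` not adjacent to `w`, gives a set `S ⊆ A*` of at most `k - 1` vertices, each of degree at
most `k - 2`, whose neighbourhoods have empty intersection. Let `X` be the union of the closed
neighbourhoods of `S`, so `|X| ≤ (k - 1)²`. A vertex `u ∉ X` has a common neighbour with each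
`v ∈ S`, and it lies in `X`; if these were all one vertex, it would be adjacent to all of `S`.
-/

lemma Set.ncard_biUnion_le_ncard_mul {ι α : Type*} {S : Set ι} (hS : S.Finite)
    (t : ι → Set α) {m : ℕ} (ht : ∀ i ∈ S, (t i).ncard ≤ m) :
    (⋃ i ∈ S, t i).ncard ≤ S.ncard * m := by
  lift S to Finset ι using hS
  calc (⋃ i ∈ (S : Set ι), t i).ncard ≤ ∑ i ∈ S, (t i).ncard := S.set_ncard_biUnion_le t
    _ ≤ S.card • m := Finset.sum_le_card_nsmul S _ m ht
    _ = (S : Set ι).ncard * m := by rw [Set.ncard_coe_finset, smul_eq_mul]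

namespace SimpleGraph

variable {V : Type*}

lemma adj_of_sup_edge_adj {G : SimpleGraph V} {u v x y : V} (h : (G ⊔ edge u v).Adj x y)
    (hyu : y ≠ u) (hyv : y ≠ v) : G.Adj x y := by
  simp only [sup_adj, edge_adj] at h
  aesop

def IsTwoDominating (G : SimpleGraph V) (X : Set V) : Prop :=
  ∀ u ∉ X, 2 ≤ (G.neighborSet u ∩ X).ncard

lemma exists_subset_ncard_le_iInter_neighborSet_eq_empty [Finite V] (G : SimpleGraph V)
    {T : Set V} {d : ℕ} (hT : ∀ v ∈ T, (G.neighborSet v).ncard ≤ d)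
    (hcap : ⋂ v ∈ T, G.neighborSet v = ∅) :
    ∃ S ⊆ T, S.ncard ≤ d + 1 ∧ ⋂ v ∈ S, G.neighborSet v = ∅ := by
  rcases isEmpty_or_nonempty V with hV | ⟨⟨x⟩⟩
  · exact ⟨∅, Set.empty_subset T, by simp, Set.eq_empty_of_isEmpty _⟩
  have hmiss : ∀ w, ∃ v ∈ T, ¬ G.Adj v w := fun w => by
    simpa [Set.eq_empty_iff_forall_notMem] using congrArg (w ∈ ·) hcap
  choose f hfT hf using hmiss
  refine ⟨insert (f x) (f '' G.neighborSet (f x)), ?_, ?_, ?_⟩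
  · exact Set.insert_subset (hfT x) (Set.image_subset_iff.mpr fun w _ => hfT w)
  · calc (insert (f x) (f '' G.neighborSet (f x))).ncard
        ≤ (f '' G.neighborSet (f x)).ncard + 1 := Set.ncard_insert_le _ _
      _ ≤ (G.neighborSet (f x)).ncard + 1 :=
        Nat.add_le_add_right (Set.ncard_image_le (Set.toFinite _)) 1
      _ ≤ d + 1 := by gcongr; exact hT _ (hfT x)
  · refine Set.eq_empty_of_forall_notMem fun w hw => hf w ?_
    have hw' := Set.mem_iInter₂.mp hw
    exact hw' (f w) (Set.mem_insert_of_mem _ ⟨w, hw' (f x) (Set.mem_insert _ _), rfl⟩)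

lemma isTwoDominating_biUnion_insert_neighborSet {G : SimpleGraph V} [Finite V]
    (hG : ∀ u v, u ≠ v → ¬ G.Adj u v → ∃ w, G.Adj u w ∧ G.Adj v w) {S : Set V}
    (hS : ⋂ v ∈ S, G.neighborSet v = ∅) :
    G.IsTwoDominating (⋃ v ∈ S, insert v (G.neighborSet v)) := by
  intro u hu
  by_contra! hlt
  have : Nonempty V := ⟨u⟩
  obtain ⟨w, hw⟩ := (Set.ncard_le_one_iff_subset_singleton
    (s := G.neighborSet u ∩ ⋃ v ∈ S, insert v (G.neighborSet v))).mp (by omega)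
  refine (Set.eq_empty_iff_forall_notMem.mp hS) w (Set.mem_iInter₂.mpr fun v hv => ?_)
  have huv : u ≠ v := fun h => hu (Set.mem_biUnion hv (h ▸ Set.mem_insert u _))
  have hna : ¬ G.Adj u v := fun h => hu (Set.mem_biUnion hv (Set.mem_insert_of_mem _ h.symm))
  obtain ⟨c, huc, hvc⟩ := hG u v huv hna
  have hcw : c = w := hw ⟨huc, Set.mem_biUnion hv (Set.mem_insert_of_mem _ hvc)⟩
  exact hcw ▸ hvc

theorem exists_isTwoDominating_ncard_le [Finite V] {G : SimpleGraph V}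
    (hG : ∀ u v, u ≠ v → ¬ G.Adj u v → ∃ w, G.Adj u w ∧ G.Adj v w) {T : Set V} {d : ℕ}
    (hT : ∀ v ∈ T, (G.neighborSet v).ncard ≤ d) (hcap : ⋂ v ∈ T, G.neighborSet v = ∅) :
    ∃ X : Set V, X.ncard ≤ (d + 1) ^ 2 ∧ G.IsTwoDominating X := by
  obtain ⟨S, hST, hScard, hS⟩ := exists_subset_ncard_le_iInter_neighborSet_eq_empty G hT hcap
  refine ⟨_, ?_, isTwoDominating_biUnion_insert_neighborSet hG hS⟩
  calc (⋃ v ∈ S, insert v (G.neighborSet v)).ncard ≤ S.ncard * (d + 1) :=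
        Set.ncard_biUnion_le_ncard_mul (Set.toFinite S) _ fun v hv =>
          (Set.ncard_insert_le _ _).trans (by gcongr; exact hT v (hST hv))
    _ ≤ (d + 1) ^ 2 := by rw [sq]; gcongr

end SimpleGraph

theorem IsSemiSat.exists_common_adj {V W : Type*} {F : SimpleGraph V} {G : SimpleGraph W}
    (hF : ∀ a b, F.Adj a b → ∃ c, F.Adj a c ∧ F.Adj b c) (hG : IsSemiSat F G) {u v : W}
    (huv : u ≠ v) (hna : ¬ G.Adj u v) : ∃ w, G.Adj u w ∧ G.Adj v w := by
  obtain ⟨f, hf, a, b, hab, hau, hbv⟩ := hG u v huv hna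
  obtain ⟨c, hac, hbc⟩ := hF a b hab
  have hcu : f c ≠ u := fun h => hac.ne' (hf (h.trans hau.symm))
  have hcv : f c ≠ v := fun h => hbc.ne' (hf (h.trans hbv.symm))
  have huc := f.map_adj hac
  have hvc := f.map_adj hbc
  rw [hau] at huc
  rw [hbv] at hvc
  exact ⟨f c, adj_of_sup_edge_adj huc hcu hcv, adj_of_sup_edge_adj hvc hcu hcv⟩

lemma wheel_exists_common_adj {k : ℕ} (hk : 3 ≤ k) (a b : Unit ⊕ Fin k)
    (hab : (wheel k).Adj a b) : ∃ c, (wheel k).Adj a c ∧ (wheel k).Adj b c := by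
  obtain ⟨m, rfl⟩ : ∃ m, k = m + 2 := ⟨k - 2, by omega⟩
  have hsucc (j : Fin (m + 2)) : (cycleGraph (m + 2)).Adj j (j + 1) :=
    cycleGraph_adj.mpr (Or.inr (add_sub_cancel_left j 1))
  match a, b with
  | .inl _, .inl _ => exact absurd hab (by simp [wheel, graphJoin])
  | .inl _, .inr j => exact ⟨.inr (j + 1), trivial, hsucc j⟩
  | .inr i, .inl _ => exact ⟨.inr (i + 1), hsucc i, trivial⟩
  | .inr _, .inr _ => exact ⟨.inl (), trivial, trivial⟩

lemma degS_le_of_mem_setAstar {n k : ℕ} {G : SimpleGraph (Fin n)} (hk : 4 ≤ k) {v : Fin n}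
    (hv : v ∈ setAstar k G) : degS G v ≤ k - 2 := by
  rcases hv with hv | hv
  · exact hv.2
  · simp only [setC, Set.mem_ofPred_eq] at hv; omega

theorem exists_dominating_set_general (k n : ℕ) (hk : 6 ≤ k)
    (G : SimpleGraph (Fin n)) (hG : IsSemiSat (wheel k) G)
    (hcap : (⋂ v ∈ setAstar k G, G.neighborSet v) = ∅) :
    ∃ X : Set (Fin n), X.ncard ≤ (k - 1) ^ 2 ∧
      ∀ u ∉ X, 2 ≤ (G.neighborSet u ∩ X).ncard := by
  have hk' : k - 2 + 1 = k - 1 := by omega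
  obtain ⟨X, hX, hdom⟩ := exists_isTwoDominating_ncard_le
    (fun _ _ => hG.exists_common_adj (wheel_exists_common_adj (by omega)))
    (fun _ hv => degS_le_of_mem_setAstar (by omega) hv) hcap
  exact ⟨X, hk' ▸ hX, hdom⟩

/-- Lemma 3.2: if no vertex is adjacent to every vertex of `A*_G`, then there is a set
`X` with `|X| ≤ (k-1)²` such that every vertex outside `X` has at least two
neighbours in `X`. -/
theorem exists_dominating_set (k n : ℕ) (hk : 6 ≤ k) (hn : (k - 1) ^ 2 + 1 ≤ n)
    (G : SimpleGraph (Fin n)) (hG : IsSemiSat (wheel k) G)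
    (hdeg : ∀ v : Fin n, degS G v ≤ n - 2)
    (hA : k ≤ (setAstar k G).ncard)
    (hcap : (⋂ v ∈ setAstar k G, G.neighborSet v) = ∅) :
    ∃ X : Set (Fin n), X.ncard ≤ (k - 1) ^ 2 ∧
      ∀ u ∉ X, 2 ≤ (G.neighborSet u ∩ X).ncard :=
  exists_dominating_set_general k n hk G hG hcap
end
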